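/- Let r ≥ 2, let (n,χ) be an l-colored complete graph, let s be the maximum size of a χ-homogeneous subset of [n], let A ⊆ [n] be χ-homogeneous with |A| = s - (4r-4), let B ⊆ [n] be χ-homogeneous with A < B (every element of A less than every element of B), and suppose |A| ≥ 2r and |B| ≥ 6r. Then (n,χ) contains an r-rich coloring. -/

import Mathlib

/-! Let `a`, `b` be the colours of `A`, `B`. Take `x ∈ A` above the `r - 1` smallest elements of
`A` and `y ∈ B` below the `r - 1` largest elements of `B`; these give `2r` increasing vertices,
`r` in `A` ending at `x` and `r` in `B` starting at `y`. Dropping the last vertex leaves a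
pattern of type 1 unless `χ {x, y} = a`; dropping the first leaves the reversal of one unless
`χ {x, y} = b`. So without an `r`-rich coloring `a = b`, and `A` without its `r - 1` smallest
elements together with `B` without its `r - 1` largest is homogeneous, of size
`|A| + |B| - 2r + 2 > s`. -/

/-- A (directed representation of an) edge: a pair of vertices `p` with `p.1 < p.2`. -/
abbrev Edge (n : ℕ) := {p : Fin n × Fin n // p.1 < p.2}

/-- An edge-`C`-colored complete graph: a number of vertices together with a coloring
of all edges by elements of `C`. -/
abbrev Coloring (C : Type) := (n : ℕ) × (Edge n → C)

/-- Build an edge from natural numbers `i < j < n`. -/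
def mkE {n : ℕ} (i j : ℕ) (hij : i < j) (hj : j < n) : Edge n :=
  ⟨(⟨i, lt_trans hij hj⟩, ⟨j, hj⟩), Fin.mk_lt_mk.mpr hij⟩

/-- The image of an edge under a strictly increasing vertex map. -/
def edgeMap {a b : ℕ} (f : Fin a → Fin b) (hf : StrictMono f) (e : Edge a) : Edge b :=
  ⟨(f e.1.1, f e.1.2), hf e.2⟩

/-- Containment of colorings: `K ⪯ L` via a strictly increasing vertex map that sends
the color of each edge to a `le`-larger color. -/
def ColLe {C : Type} (le : C → C → Prop) (K L : Coloring C) : Prop :=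
  ∃ f : Fin K.1 → Fin L.1, ∃ hf : StrictMono f,
    ∀ e : Edge K.1, le (K.2 e) (L.2 (edgeMap f hf e))

/-- A lower ideal of colorings. -/
def IsIdeal {C : Type} (le : C → C → Prop) (X : Set (Coloring C)) : Prop :=
  ∀ K L : Coloring C, ColLe le K L → L ∈ X → K ∈ X

/-- The reversal of an edge under the order-reversing permutation of the vertices. -/
def revE {n : ℕ} (e : Edge n) : Edge n :=
  ⟨(e.1.2.rev, e.1.1.rev), Fin.rev_lt_rev.mpr e.2⟩

/-- The reversal of a coloring. -/
def revC {n : ℕ} {C : Type} (χ : Edge n → C) : Edge n → C := fun e => χ (revE e)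

/-- A coloring on `2r-1` vertices is of type 1 (0-indexed version of:
`χ({i,i+1}) = a` for `1 ≤ i ≤ r-1` and `χ({r,r+1}) = b` for two distinct colors). -/
def Type1 {C : Type} (r : ℕ) (χ : Edge (2 * r - 1) → C) : Prop :=
  ∃ a b : C, a ≠ b ∧
    (∀ (t : ℕ) (h : t + 2 ≤ r), χ (mkE t (t + 1) (by omega) (by omega)) = a) ∧
    (∀ h : r < 2 * r - 1, χ (mkE (r - 1) r (by omega) h) = b)

/-- A coloring on `2r-1` vertices is of type 2 (0-indexed version of:
`χ({1,i}) = a` for `2 ≤ i ≤ r` and `χ({1,r+1}) = b` for two distinct colors). -/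
def Type2 {C : Type} (r : ℕ) (χ : Edge (2 * r - 1) → C) : Prop :=
  ∃ a b : C, a ≠ b ∧
    (∀ (t : ℕ) (h1 : 1 ≤ t) (h2 : t ≤ r - 1), χ (mkE 0 t (by omega) (by omega)) = a) ∧
    (∀ h : r < 2 * r - 1, χ (mkE 0 r (by omega) h) = b)

/-- An `r`-rich coloring: on `2r-1` vertices, of type 1 or type 2, in it or its reversal. -/
def Rich {C : Type} (r : ℕ) (χ : Edge (2 * r - 1) → C) : Prop :=
  Type1 r χ ∨ Type1 r (revC χ) ∨ Type2 r χ ∨ Type2 r (revC χ)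

/-- `(n,χ)` contains an `r`-rich coloring (with respect to discrete containment). -/
def ContainsRich {C : Type} {n : ℕ} (r : ℕ) (χ : Edge n → C) : Prop :=
  ∃ χ' : Edge (2 * r - 1) → C, Rich r χ' ∧
    ∃ f : Fin (2 * r - 1) → Fin n, ∃ hf : StrictMono f,
      ∀ e : Edge (2 * r - 1), χ' e = χ (edgeMap f hf e)

/-- A set `S` of vertices is `χ`-homogeneous: all edges inside `S` have the same color. -/
def Homog {n l : ℕ} (χ : Edge n → Fin l) (S : Finset (Fin n)) : Prop :=
  ∀ i ∈ S, ∀ j ∈ S, ∀ i' ∈ S, ∀ j' ∈ S, ∀ (h : i < j) (h' : i' < j'),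
    χ ⟨(i, j), h⟩ = χ ⟨(i', j'), h'⟩

theorem Fin.strictMono_append {α : Type*} [Preorder α] {p q : ℕ} {f : Fin p → α}
    {g : Fin q → α} (hf : StrictMono f) (hg : StrictMono g) (hfg : ∀ i j, f i < g j) :
    StrictMono (Fin.append f g) := by
  intro i j hij
  induction i using Fin.addCases <;> induction j using Fin.addCases <;>
    simp only [Fin.append_left, Fin.append_right] <;>
    simp only [Fin.lt_def, Fin.val_castAdd, Fin.val_natAdd] at hij
  · exact hf hij
  · exact hfg _ _
  · omega
  · exact hg (Fin.lt_def.mpr (by omega))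

theorem Finset.exists_split_lt {α : Type*} [LinearOrder α] (s : Finset α) (k : ℕ)
    (hk : k ≤ s.card) :
    ∃ s₀ s₁ : Finset α, s₀ ⊆ s ∧ s₁ ⊆ s ∧ s₀.card = k ∧ s₁.card = s.card - k ∧
      ∀ a ∈ s₀, ∀ b ∈ s₁, a < b := by
  induction k with
  | zero => exact ⟨∅, s, empty_subset _, subset_refl _, rfl, rfl, by simp⟩
  | succ k ih =>
    obtain ⟨s₀, s₁, h₀, h₁, hc₀, hc₁, hlt⟩ := ih (by omega)
    have hne : s₁.Nonempty := card_pos.mp (by omega)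
    set m := s₁.min' hne
    have hm : m ∈ s₁ := min'_mem _ _
    have hm₀ : m ∉ s₀ := fun h => lt_irrefl m (hlt m h m hm)
    refine ⟨insert m s₀, s₁.erase m, insert_subset (h₁ hm) h₀, (erase_subset _ _).trans h₁,
      by rw [card_insert_of_notMem hm₀, hc₀], by rw [card_erase_of_mem hm, hc₁]; omega, ?_⟩
    intro a ha b hb
    obtain ⟨hbm, hb⟩ := mem_erase.mp hb
    rcases mem_insert.mp ha with rfl | ha
    · exact lt_of_le_of_ne (min'_le _ _ hb) hbm.symm
    · exact hlt a ha b hb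

theorem exists_strictMono_through {α : Type*} [LinearOrder α] {x y : α} {P Q : Finset α}
    {p q : ℕ} (hP : P.card + 1 = p) (hQ : Q.card + 1 = q) (hPx : ∀ a ∈ P, a < x)
    (hxy : x < y) (hQy : ∀ b ∈ Q, y < b) :
    ∃ u : Fin (p + q) → α, StrictMono u ∧
      (∀ t : Fin (p + q), t.1 < p → u t ∈ insert x P) ∧
      (∀ t : Fin (p + q), p ≤ t.1 → u t ∈ insert y Q) ∧
      u ⟨p - 1, by omega⟩ = x ∧ u ⟨p, by omega⟩ = y := by
  have hx : x ∉ P := fun h => lt_irrefl x (hPx x h)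
  have hy : y ∉ Q := fun h => lt_irrefl y (hQy y h)
  have hXc : (insert x P).card = p := by rw [Finset.card_insert_of_notMem hx, hP]
  have hYc : (insert y Q).card = q := by rw [Finset.card_insert_of_notMem hy, hQ]
  have hle_x : ∀ a ∈ insert x P, a ≤ x := fun a ha =>
    (Finset.mem_insert.mp ha).elim le_of_eq fun ha => (hPx a ha).le
  have hy_le : ∀ b ∈ insert y Q, y ≤ b := fun b ha =>
    (Finset.mem_insert.mp ha).elim ge_of_eq fun hb => (hQy b hb).le
  set f := (insert x P).orderEmbOfFin hXc
  set g := (insert y Q).orderEmbOfFin hYc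
  have hfg : ∀ i j, f i < g j := fun i j =>
    ((hle_x _ (Finset.orderEmbOfFin_mem _ _ i)).trans_lt hxy).trans_le
      (hy_le _ (Finset.orderEmbOfFin_mem _ _ j))
  refine ⟨Fin.append f g, Fin.strictMono_append f.strictMono g.strictMono hfg,
    fun t ht => ?_, fun t ht => ?_, ?_, ?_⟩
  · rw [show t = Fin.castAdd q ⟨t, ht⟩ from rfl, Fin.append_left]
    exact Finset.orderEmbOfFin_mem _ _ _
  · rw [show t = Fin.natAdd p ⟨t - p, by omega⟩ from Fin.ext (by simp; omega),
      Fin.append_right]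
    exact Finset.orderEmbOfFin_mem _ _ _
  · rw [show (⟨p - 1, _⟩ : Fin (p + q)) = Fin.castAdd q ⟨p - 1, by omega⟩ from rfl,
      Fin.append_left, Finset.orderEmbOfFin_last hXc (by omega)]
    exact le_antisymm (Finset.max'_le _ _ _ hle_x)
      (Finset.le_max' _ _ (Finset.mem_insert_self _ _))
  · rw [show (⟨p, _⟩ : Fin (p + q)) = Fin.natAdd p ⟨0, by omega⟩ from rfl,
      Fin.append_right, Finset.orderEmbOfFin_zero hYc (by omega)]
    exact le_antisymm (Finset.min'_le _ _ (Finset.mem_insert_self _ _))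
      (Finset.le_min' _ _ _ hy_le)

theorem mkE_congr {n i j i' j' : ℕ} (hi : i = i') (hj : j = j') (hij : i < j) (hjn : j < n)
    (hij' : i' < j') (hjn' : j' < n) : mkE i j hij hjn = mkE i' j' hij' hjn' := by
  subst hi hj; rfl

theorem revE_mkE {n i j : ℕ} (hij : i < j) (hjn : j < n) :
    revE (mkE i j hij hjn) = mkE (n - 1 - j) (n - 1 - i) (by omega) (by omega) := by
  refine Subtype.ext (Prod.ext (Fin.ext ?_) (Fin.ext ?_)) <;> simp [revE, mkE] <;> omega

theorem containsRich_of_path {C : Type} {n r : ℕ} (hr : 2 ≤ r) (χ : Edge n → C)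
    (w : Fin (2 * r - 1) → Fin n) (hw : StrictMono w) {a : C}
    (ha : ∀ t (h : t + 2 ≤ r), χ (edgeMap w hw (mkE t (t + 1) (by omega) (by omega))) = a)
    (hb : χ (edgeMap w hw (mkE (r - 1) r (by omega) (by omega))) ≠ a) :
    ContainsRich r χ :=
  ⟨fun e => χ (edgeMap w hw e), Or.inl ⟨a, _, hb.symm, ha, fun _ => rfl⟩, w, hw, fun _ => rfl⟩

theorem containsRich_of_revPath {C : Type} {n r : ℕ} (hr : 2 ≤ r) (χ : Edge n → C)
    (w : Fin (2 * r - 1) → Fin n) (hw : StrictMono w) {a : C}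
    (ha : ∀ t, r - 1 ≤ t → ∀ h : t + 2 < 2 * r,
      χ (edgeMap w hw (mkE t (t + 1) (by omega) (by omega))) = a)
    (hb : χ (edgeMap w hw (mkE (r - 2) (r - 1) (by omega) (by omega))) ≠ a) :
    ContainsRich r χ := by
  refine ⟨fun e => χ (edgeMap w hw e),
    Or.inr (Or.inl ⟨a, _, hb.symm, fun t h => ?_, fun h => ?_⟩), w, hw, fun _ => rfl⟩
  · rw [revC, revE_mkE, mkE_congr (i' := 2 * r - 3 - t) (j' := 2 * r - 3 - t + 1)
      (by omega) (by omega) _ _ (by omega) (by omega)]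
    exact ha _ (by omega) (by omega)
  · rw [revC, revE_mkE, mkE_congr (i' := r - 2) (j' := r - 1)
      (by omega) (by omega) _ _ (by omega) (by omega)]

section Homogeneous

variable {n l : ℕ} {χ : Edge n → Fin l}

theorem Homog.mono {S T : Finset (Fin n)} (hS : Homog χ S) (hTS : T ⊆ S) : Homog χ T :=
  fun i hi j hj i' hi' j' hj' => hS i (hTS hi) j (hTS hj) i' (hTS hi') j' (hTS hj')

theorem cross_color_eq_of_not_containsRich {r : ℕ} (hr : 2 ≤ r) (hno : ¬ ContainsRich r χ)
    {A B P Q : Finset (Fin n)} (hA : Homog χ A) (hB : Homog χ B) {x y : Fin n}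
    (hxP : insert x P ⊆ A) (hyQ : insert y Q ⊆ B) (hP : P.card + 1 = r) (hQ : Q.card + 1 = r)
    (hPx : ∀ a ∈ P, a < x) (hxy : x < y) (hQy : ∀ b ∈ Q, y < b) :
    (∀ i ∈ A, ∀ j ∈ A, ∀ h : i < j, χ ⟨(x, y), hxy⟩ = χ ⟨(i, j), h⟩) ∧
      (∀ i ∈ B, ∀ j ∈ B, ∀ h : i < j, χ ⟨(x, y), hxy⟩ = χ ⟨(i, j), h⟩) := by
  obtain ⟨u, hu, huP, huQ, hx, hy⟩ := exists_strictMono_through hP hQ hPx hxy hQy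
  have huA : ∀ t : Fin (r + r), t.1 < r → u t ∈ A := fun t ht => hxP (huP t ht)
  have huB : ∀ t : Fin (r + r), r ≤ t.1 → u t ∈ B := fun t ht => hyQ (huQ t ht)
  subst hx hy
  refine ⟨fun i hi j hj hij => ?_, fun i hi j hj hij => ?_⟩ <;> by_contra hne
  · exact hno <| containsRich_of_path hr χ (fun t => u ⟨t, by omega⟩) (fun _ _ h => hu h)
      (fun t ht => hA (u ⟨t, by omega⟩) (huA _ (by simp only; omega)) (u ⟨t + 1, by omega⟩)
        (huA _ (by simp only; omega)) _ hi _ hj _ hij) hne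
  · exact hno <| containsRich_of_revPath hr χ (fun t => u ⟨t + 1, by omega⟩)
      (fun _ _ h => hu (Fin.lt_def.mpr (Nat.succ_lt_succ h)))
      (fun t ht _ => hB (u ⟨t + 1, by omega⟩) (huB _ (by simp only; omega))
        (u ⟨t + 1 + 1, by omega⟩) (huB _ (by simp only; omega)) _ hi _ hj _ hij)
      (by convert hne using 4 <;> simp only [edgeMap, mkE] <;> congr 2 <;> omega)

theorem Homog.union {X Y : Finset (Fin n)} (hX : Homog χ X) (hX2 : 1 < X.card)
    (hXY : ∀ x ∈ X, ∀ y ∈ Y, x < y)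
    (hcross : ∀ x (hx : x ∈ X) y (hy : y ∈ Y),
      (∀ i ∈ X, ∀ j ∈ X, ∀ h : i < j, χ ⟨(x, y), hXY x hx y hy⟩ = χ ⟨(i, j), h⟩) ∧
        (∀ i ∈ Y, ∀ j ∈ Y, ∀ h : i < j, χ ⟨(x, y), hXY x hx y hy⟩ = χ ⟨(i, j), h⟩)) :
    Homog χ (X ∪ Y) := by
  have hlt := X.min'_lt_max'_of_card hX2
  have hmin := X.min'_mem (Finset.card_pos.mp (by omega))
  have hmax := X.max'_mem (Finset.card_pos.mp (by omega))
  have hcolor : ∀ i ∈ X ∪ Y, ∀ j ∈ X ∪ Y, ∀ h : i < j, χ ⟨(i, j), h⟩ = χ ⟨(_, _), hlt⟩ := by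
    intro i hi j hj h
    rcases Finset.mem_union.mp hi with hi | hi <;> rcases Finset.mem_union.mp hj with hj | hj
    · exact hX _ hi _ hj _ hmin _ hmax h hlt
    · exact (hcross i hi j hj).1 _ hmin _ hmax hlt
    · exact absurd h (hXY j hj i hi).asymm
    · exact ((hcross _ hmin j hj).2 i hi j hj h).symm.trans
        ((hcross _ hmin j hj).1 _ hmin _ hmax hlt)
  intro i hi j hj i' hi' j' hj' h h'
  rw [hcolor i hi j hj h, hcolor i' hi' j' hj' h']

end Homogeneous

theorem stmt_14 (l r n s : ℕ) (hr : 2 ≤ r) (χ : Edge n → Fin l)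
    (hub : ∀ S : Finset (Fin n), Homog χ S → S.card ≤ s)
    (A B : Finset (Fin n)) (hA : Homog χ A) (hAc : A.card = s - (4 * r - 4))
    (hB : Homog χ B) (hAB : ∀ a ∈ A, ∀ b ∈ B, a < b)
    (hA2 : 2 * r ≤ A.card) (hB6 : 6 * r ≤ B.card) :
    ContainsRich r χ := by
  by_contra hno
  obtain ⟨A₀, A₁, hA₀, hA₁, hA₀c, hA₁c, hA₀₁⟩ := A.exists_split_lt (r - 1) (by omega)
  obtain ⟨B₀, B₁, hB₀, hB₁, hB₀c, hB₁c, hB₀₁⟩ := B.exists_split_lt (B.card - (r - 1)) (by omega)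
  have hAB' : ∀ x ∈ A₁, ∀ y ∈ B₀, x < y := fun x hx y hy => hAB x (hA₁ hx) y (hB₀ hy)
  have hcross (x) (hx : x ∈ A₁) (y) (hy : y ∈ B₀) :=
    cross_color_eq_of_not_containsRich hr hno hA hB (Finset.insert_subset (hA₁ hx) hA₀)
      (Finset.insert_subset (hB₀ hy) hB₁) (by omega) (by omega) (fun a ha => hA₀₁ a ha x hx)
      (hAB' x hx y hy) (fun b hb => hB₀₁ y hy b hb)
  have hS : Homog χ (A₁ ∪ B₀) :=
    (hA.mono hA₁).union (by omega) hAB' fun x hx y hy =>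
      ⟨fun i hi j hj => (hcross x hx y hy).1 i (hA₁ hi) j (hA₁ hj),
        fun i hi j hj => (hcross x hx y hy).2 i (hB₀ hi) j (hB₀ hj)⟩
  have hdisj : Disjoint A₁ B₀ :=
    Finset.disjoint_left.mpr fun x hx hxB => lt_irrefl x (hAB' x hx x hxB)
  have := hub _ hS
  rw [Finset.card_union_of_disjoint hdisj] at this
  omega
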